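/- For all integers r and s: 5060 W_{r+s} = (-264 K_{s-11} + 1265 K_{s+1} - 4279 K_{s-1}) W_{r-2} + (-1079 K_{s-11} + 6325 K_{s+1} - 21394 K_{s-1}) W_r + (21 K_{s-1} + K_{s-11}) W_{r+10}. -/
import Mathlib

lemma trib_zero (f : ℤ → ℤ) (h : ∀ r : ℤ, f r = f (r-1) + f (r-2) + f (r-3))
    (h0 : f 0 = 0) (h1 : f 1 = 0) (h2 : f 2 = 0) : ∀ z : ℤ, f z = 0 := by
  have pos : ∀ n : ℕ, f n = 0 ∧ f (n+1) = 0 ∧ f (n+2) = 0 := by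
    intro n
    induction n with
    | zero => simpa using ⟨h0, h1, h2⟩
    | succ k ih =>
      obtain ⟨a, b, c⟩ := ih
      have h3 := h ((k:ℤ)+3)
      have e1 : (k:ℤ)+3-1 = k+2 := by ring
      have e2 : (k:ℤ)+3-2 = k+1 := by ring
      have e3 : (k:ℤ)+3-3 = k := by ring
      rw [e1, e2, e3] at h3
      refine ⟨?_, ?_, ?_⟩
      · push_cast; exact b
      · push_cast; rw [show ((k:ℤ)+1+1) = (k:ℤ)+2 by ring]; exact c
      · push_cast; rw [show ((k:ℤ)+1+2) = (k:ℤ)+3 by ring]; linarith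
  have neg : ∀ n : ℕ, f (-(n:ℤ)) = 0 ∧ f (-(n:ℤ)+1) = 0 ∧ f (-(n:ℤ)+2) = 0 := by
    intro n
    induction n with
    | zero => simpa using ⟨h0, h1, h2⟩
    | succ k ih =>
      obtain ⟨a, b, c⟩ := ih
      have h3 := h (-(k:ℤ)+2)
      have e1 : -(k:ℤ)+2-1 = -k+1 := by ring
      have e2 : -(k:ℤ)+2-2 = -k := by ring
      have e3 : -(k:ℤ)+2-3 = -(k:ℤ)-1 := by ring
      rw [e1, e2, e3] at h3
      refine ⟨?_, ?_, ?_⟩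
      · push_cast; rw [show (-((k:ℤ)+1)) = -(k:ℤ)-1 by ring]; linarith
      · push_cast; rw [show (-((k:ℤ)+1)+1) = -(k:ℤ) by ring]; exact a
      · push_cast; rw [show (-((k:ℤ)+1)+2) = -(k:ℤ)+1 by ring]; exact b
  intro z
  rcases le_or_gt 0 z with hz | hz
  · have := (pos z.toNat).1
    rwa [Int.toNat_of_nonneg hz] at this
  · have := (neg (-z).toNat).1
    rw [Int.toNat_of_nonneg (by omega)] at this
    simpa using this

theorem stmt_13 (W K : ℤ → ℤ)
    (hW : ∀ r : ℤ, W r = W (r-1) + W (r-2) + W (r-3))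
    (hK : ∀ r : ℤ, K r = K (r-1) + K (r-2) + K (r-3))
    (hK0 : K 0 = 3) (hK1 : K 1 = 1) (hK2 : K 2 = 3)
    (r s : ℤ) :
    5060 * W (r+s) = (-264 * K (s-11) + 1265 * K (s+1) - 4279 * K (s-1)) * W (r-2)
      + (-1079 * K (s-11) + 6325 * K (s+1) - 21394 * K (s-1)) * W r
      + (21 * K (s-1) + K (s-11)) * W (r+10) := by
  -- K values
  have kv : ∀ x : ℤ, K x = K (x+2) - K (x+1) - K x → True := fun _ _ => trivial
  have getK : ∀ x : ℤ, K x = K (x+3) - K (x+2) - K (x+1) := by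
    intro x
    have := hK (x+3)
    have e1 : x+3-1 = x+2 := by ring
    have e2 : x+3-2 = x+1 := by ring
    have e3 : x+3-3 = x := by ring
    rw [e1, e2, e3] at this
    linarith
  have hK3 : K 3 = 7 := by have := hK 3; norm_num at this; linarith
  have km1 : K (-1) = -1 := by have := getK (-1); norm_num at this; linarith
  have km2 : K (-2) = -1 := by have := getK (-2); norm_num at this; linarith
  have km3 : K (-3) = 5 := by have := getK (-3); norm_num at this; linarith
  have km4 : K (-4) = -5 := by have := getK (-4); norm_num at this; linarith
  have km5 : K (-5) = -1 := by have := getK (-5); norm_num at this; linarith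
  have km6 : K (-6) = 11 := by have := getK (-6); norm_num at this; linarith
  have km7 : K (-7) = -15 := by have := getK (-7); norm_num at this; linarith
  have km8 : K (-8) = 3 := by have := getK (-8); norm_num at this; linarith
  have km9 : K (-9) = 23 := by have := getK (-9); norm_num at this; linarith
  have km10 : K (-10) = -41 := by have := getK (-10); norm_num at this; linarith
  have km11 : K (-11) = 21 := by have := getK (-11); norm_num at this; linarith
  set g : ℤ → ℤ := fun t => 5060 * W (r+t)
      - ((-264 * K (t-11) + 1265 * K (t+1) - 4279 * K (t-1)) * W (r-2)
      + (-1079 * K (t-11) + 6325 * K (t+1) - 21394 * K (t-1)) * W r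
      + (21 * K (t-1) + K (t-11)) * W (r+10)) with hg
  have key : g s = 0 := by
    apply trib_zero g
    · intro t
      simp only [hg]
      linear_combination (norm := ring_nf) 5060 * hW (r+t)
        - (-264 * W (r-2) - 1079 * W r + W (r+10)) * hK (t-11)
        - (1265 * W (r-2) + 6325 * W r) * hK (t+1)
        - (-4279 * W (r-2) - 21394 * W r + 21 * W (r+10)) * hK (t-1)
    · simp only [hg]
      norm_num
      rw [km11, km1, hK1]
      ring
    · simp only [hg]
      norm_num
      rw [km10, hK2, hK0]
      have b1 := hW (r+10); have b2 := hW (r+9); have b3 := hW (r+8)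
      have b4 := hW (r+7); have b5 := hW (r+6); have b6 := hW (r+5)
      have b7 := hW (r+4); have b8 := hW (r+3); have b9 := hW (r+2)
      have b10 := hW (r+1)
      ring_nf at b1 b2 b3 b4 b5 b6 b7 b8 b9 b10 ⊢
      linarith
    · simp only [hg]
      norm_num
      rw [km9, hK3, hK1]
      have b1 := hW (r+10); have b2 := hW (r+9); have b3 := hW (r+8)
      have b4 := hW (r+7); have b5 := hW (r+6); have b6 := hW (r+5)
      have b7 := hW (r+4); have b8 := hW (r+3); have b9 := hW (r+2)
      have b10 := hW (r+1)
      ring_nf at b1 b2 b3 b4 b5 b6 b7 b8 b9 b10 ⊢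
      linarith
  simp only [hg] at key
  linarith
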